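/- For every x ∈ (0, π/2) and every integer m ≥ 2, |sin x / x - (cos x + 2)/3 - Σ_{k=2}^{m} (-1)^{k+1} B(k) x^{2k}| < B(m+1) x^{2m+2}. -/

import Mathlib

open Real Finset

/-- The coefficient `B(k) = (2/3)·(k-1)/(2k+1)!`. -/
noncomputable def wchB (k : ℕ) : ℝ :=
  (2 / 3) * ((k : ℝ) - 1) / (Nat.factorial (2 * k + 1) : ℝ)

/-!
The Taylor series of `sin x / x - cos x / 3` is `∑ (-1)^(n+1) B(n) x^(2n)`, summed from `n = 0`
(`B(0) = -2/3` gives the constant `2/3`, `B(1) = 0`). Hence the error is `(-1)^m` times an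
alternating series with terms `B(n) x^(2n)`, `n ≥ m + 1`, which strictly decrease as soon as
`x² ≤ 4`; a strictly decreasing alternating series lies strictly between `0` and its first term.
-/

section Alternating

variable {E : Type*} [Ring E] [PartialOrder E] [IsOrderedRing E]
  [TopologicalSpace E] [OrderClosedTopology E]

theorem StrictAnti.alternating_hasSum_mem_Ioo {c : ℕ → E} {l : E} (hc : StrictAnti c)
    (hl : HasSum (fun j ↦ (-1) ^ j * c j) l) : l ∈ Set.Ioo 0 (c 0) := by
  have hlower := hc.antitone.alternating_series_le_tendsto hl.tendsto_sum_nat 1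
  have hupper := hc.antitone.tendsto_le_alternating_series hl.tendsto_sum_nat 1
  simp only [sum_range_succ, sum_range_zero, zero_add, mul_one, pow_zero, pow_one,
    neg_one_sq, one_mul, neg_one_mul, ← sub_eq_add_neg] at hlower hupper
  constructor
  · calc (0 : E) < c 0 - c 1 := sub_pos.2 (hc zero_lt_one)
      _ ≤ l := hlower
  · calc l ≤ c 0 - c 1 + c 2 := hupper
      _ < c 0 := by
        rw [sub_add_eq_add_sub, sub_lt_iff_lt_add]
        exact add_lt_add_right (hc one_lt_two) _

end Alternating

/-- Termwise, `B(n) = 1 / (3 · (2n)!) - 1 / (2n + 1)!`. -/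
theorem hasSum_sin_div_sub_cos_div_three {x : ℝ} (hx : x ≠ 0) :
    HasSum (fun n : ℕ ↦ (-1 : ℝ) ^ (n + 1) * wchB n * x ^ (2 * n))
      (sin x / x - cos x / 3) := by
  refine ((Real.hasSum_sin x).div_const x).sub ((Real.hasSum_cos x).div_const 3) |>.congr_fun
    fun n ↦ ?_
  have hfac : ((2 * n + 1).factorial : ℝ) = (2 * n + 1) * (2 * n).factorial := by
    push_cast [Nat.factorial_succ]; ring
  rw [wchB, hfac, pow_succ, pow_succ]
  field_simp
  ring

theorem wchB_zero : wchB 0 = -2 / 3 := by norm_num [wchB]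

theorem wchB_one : wchB 1 = 0 := by norm_num [wchB]

theorem wchB_succ_mul_sq_lt {K : ℕ} (hK : 2 ≤ K) {x : ℝ} (hx : x ^ 2 ≤ 4) :
    wchB (K + 1) * x ^ 2 < wchB K := by
  have hk : (2 : ℝ) ≤ K := by exact_mod_cast hK
  have hfac : ((2 * (K + 1) + 1).factorial : ℝ)
      = (2 * K + 3) * (2 * K + 2) * (2 * K + 1).factorial := by
    rw [show 2 * (K + 1) + 1 = 2 * K + 1 + 1 + 1 by ring]
    push_cast [Nat.factorial_succ]; ring
  have hpos : (0 : ℝ) < (2 * K + 1).factorial := by positivity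
  rw [wchB, wchB, hfac, div_mul_eq_mul_div, div_lt_div_iff₀ (by positivity) hpos]
  push_cast
  have hmain : (K + 1 - 1) * x ^ 2 < (K - 1) * ((2 * K + 3) * (2 * K + 2) : ℝ) :=
    calc (K + 1 - 1) * x ^ 2 ≤ K * 4 := by rw [add_sub_cancel_right]; gcongr
      _ < (2 * K + 3) * (2 * K + 2) := by nlinarith
      _ ≤ (K - 1) * ((2 * K + 3) * (2 * K + 2)) :=
        le_mul_of_one_le_left (by positivity) (by linarith)
  nlinarith

theorem wchB_mul_pow_strictAnti {x : ℝ} (hx₀ : x ≠ 0) (hx : x ^ 2 ≤ 4) {n : ℕ}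
    (hn : 2 ≤ n) :
    StrictAnti fun j ↦ wchB (n + j) * x ^ (2 * (n + j)) := by
  refine strictAnti_nat_of_succ_lt fun j ↦ ?_
  rw [← add_assoc, show 2 * (n + j + 1) = 2 * (n + j) + 2 by ring, pow_add,
    mul_comm (x ^ _), ← mul_assoc]
  gcongr
  · exact (even_two_mul _).pow_pos hx₀
  · exact wchB_succ_mul_sq_lt (by omega : 2 ≤ n + j) hx

theorem sum_range_succ_eq_two_thirds_add_sum_Icc (x : ℝ) {m : ℕ} (hm : 1 ≤ m) :
    ∑ k ∈ range (m + 1), (-1 : ℝ) ^ (k + 1) * wchB k * x ^ (2 * k)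
      = 2 / 3 + ∑ k ∈ Icc 2 m, (-1 : ℝ) ^ (k + 1) * wchB k * x ^ (2 * k) := by
  rw [← sum_range_add_sum_Ico _ (by omega : 2 ≤ m + 1), Ico_add_one_right_eq_Icc]
  norm_num [sum_range_succ, wchB_zero, wchB_one]

theorem hasSum_neg_one_pow_mul_remainder {x : ℝ} (hx : x ≠ 0) {m : ℕ} (hm : 1 ≤ m) :
    HasSum (fun j ↦ (-1 : ℝ) ^ j * (wchB (m + 1 + j) * x ^ (2 * (m + 1 + j))))
      ((-1) ^ m * (sin x / x - (cos x + 2) / 3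
        - ∑ k ∈ Icc 2 m, (-1 : ℝ) ^ (k + 1) * wchB k * x ^ (2 * k))) := by
  have htail := (hasSum_nat_add_iff' (m + 1)).2 (hasSum_sin_div_sub_cos_div_three hx)
  rw [sum_range_succ_eq_two_thirds_add_sum_Icc x hm] at htail
  rw [show sin x / x - (cos x + 2) / 3 = sin x / x - cos x / 3 - 2 / 3 by ring, sub_sub]
  refine (htail.mul_left ((-1) ^ m)).congr_fun fun j ↦ ?_
  have hsign : (-1 : ℝ) ^ m * (-1) ^ (j + (m + 1) + 1) = (-1) ^ j := by
    rw [← pow_add, show m + (j + (m + 1) + 1) = j + 2 * (m + 1) by ring, pow_add, pow_mul]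
    norm_num
  rw [← hsign, add_comm j]
  ring

theorem sinx_div_x_sub_cos_error :
    ∀ x ∈ Set.Ioo (0 : ℝ) (π / 2), ∀ m : ℕ, 2 ≤ m →
      |Real.sin x / x - (Real.cos x + 2) / 3
          - ∑ k ∈ Finset.Icc 2 m, (-1 : ℝ) ^ (k + 1) * wchB k * x ^ (2 * k)|
        < wchB (m + 1) * x ^ (2 * m + 2) := by
  rintro x ⟨hx₀, hxπ⟩ m hm
  have hx : x ^ 2 ≤ 4 := by nlinarith [pi_lt_four]
  have hanti := wchB_mul_pow_strictAnti hx₀.ne' hx (by omega : 2 ≤ m + 1)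
  obtain ⟨hpos, hlt⟩ :=
    hanti.alternating_hasSum_mem_Ioo (hasSum_neg_one_pow_mul_remainder hx₀.ne' (by omega))
  calc _ = |(-1 : ℝ) ^ m * _| := by simp [abs_mul]
    _ = _ := abs_of_pos hpos
    _ < _ := hlt
    _ = _ := by ring_nf
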